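/- arXiv:1705.05650 — 9 statements merged into one kernel-verified Lean document; each statement's English description precedes it below -/
import Mathlib

section
/- Kleisli composition of multirelations is associative: for multirelations R ⊆ X × ℘(Y), S ⊆ Y × ℘(Z), T ⊆ Z × ℘(W), we have (R ∘ S) ∘ T = R ∘ (S ∘ T). -/
open Set

/-- Ordinary relational composition. -/
def relComp {A B C : Type*} (R : Set (A × B)) (S : Set (B × C)) : Set (A × C) :=
  {p | ∃ b, (p.1, b) ∈ R ∧ (b, p.2) ∈ S}

/-- Kleisli composition of multirelations. -/
def kleisliComp {X Y Z : Type*} (R : Set (X × Set Y)) (S : Set (Y × Set Z)) :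
    Set (X × Set Z) :=
  {p | ∃ B, (p.1, B) ∈ R ∧ p.2 = ⋃₀ {C | ∃ b ∈ B, (b, C) ∈ S}}

/-- Kleisli lifting of a multirelation. -/
def kleisliLift {Y Z : Type*} (S : Set (Y × Set Z)) : Set (Set Y × Set Z) :=
  {p | p.2 = ⋃₀ {C | ∃ b ∈ p.1, (b, C) ∈ S}}

/-- Parikh lifting of a multirelation. -/
def parikhLift {Y Z : Type*} (S : Set (Y × Set Z)) : Set (Set Y × Set Z) :=
  {p | ∀ b ∈ p.1, (b, p.2) ∈ S}

/-- Parikh composition of multirelations. -/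
def parikhComp {X Y Z : Type*} (R : Set (X × Set Y)) (S : Set (Y × Set Z)) :
    Set (X × Set Z) :=
  {p | ∃ B, (p.1, B) ∈ R ∧ ∀ b ∈ B, (b, p.2) ∈ S}

/-- Peleg composition of multirelations. -/
def pelegComp {X Y Z : Type*} (R : Set (X × Set Y)) (S : Set (Y × Set Z)) :
    Set (X × Set Z) :=
  {p | ∃ B, (p.1, B) ∈ R ∧
    ∃ f : Y → Set Z, (∀ b ∈ B, (b, f b) ∈ S) ∧ p.2 = ⋃ b ∈ B, f b}

/-- Peleg lifting of a multirelation. -/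
def pelegLift {Y Z : Type*} (S : Set (Y × Set Z)) : Set (Set Y × Set Z) :=
  {p | ∃ f : Y → Set Z, (∀ b ∈ p.1, (b, f b) ∈ S) ∧ p.2 = ⋃ b ∈ p.1, f b}

/-- The singleton map 1_Y = {(y,{y})}. -/
def singletonMap (Y : Type*) : Set (Y × Set Y) := {p | p.2 = {p.1}}

/-- Converse of the membership relation: {(y,A) | y ∈ A}. -/
def memConv (Y : Type*) : Set (Y × Set Y) := {p | p.1 ∈ p.2}

/-- The inclusion relation Ξ on the powerset. -/
def inclRel (Z : Type*) : Set (Set Z × Set Z) := {p | p.1 ⊆ p.2}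

/-- Up-closed multirelations. -/
def upClosed {X Y : Type*} (R : Set (X × Set Y)) : Prop :=
  ∀ a B C, (a, B) ∈ R → B ⊆ C → (a, C) ∈ R

/-- Univalent relations (partial functions). -/
def isUnivalent {A B : Type*} (f : Set (A × B)) : Prop :=
  ∀ x y y', (x, y) ∈ f → (x, y') ∈ f → y = y'

/-- Domain of a relation. -/
def relDom {A B : Type*} (f : Set (A × B)) : Set A := {x | ∃ y, (x, y) ∈ f}

/-- Union-closed multirelations. -/
def unionClosed {Z W : Type*} (T : Set (Z × Set W)) : Prop :=
  ∀ z (𝔅 : Set (Set W)), 𝔅.Nonempty → (∀ B ∈ 𝔅, (z, B) ∈ T) → (z, ⋃₀ 𝔅) ∈ T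

/-! Writing `S⁎ B` for the union of all `C` with `(b, C) ∈ S` for some `b ∈ B`, we have
`(a, A) ∈ R ∘ S ↔ ∃ B, (a, B) ∈ R ∧ A = S⁎ B`. Since `T⁎` preserves arbitrary unions,
`T⁎ (S⁎ B) = (S ∘ T)⁎ B`, and both sides of the associativity law become
`{(a, T⁎ (S⁎ B)) | (a, B) ∈ R}`. -/

/-- The function whose graph is `kleisliLift S`. -/
def kleisliImage {Y Z : Type*} (S : Set (Y × Set Z)) (B : Set Y) : Set Z :=
  ⋃₀ {C | ∃ b ∈ B, (b, C) ∈ S}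

section

variable {X Y Z W : Type*}

theorem mem_kleisliComp {R : Set (X × Set Y)} {S : Set (Y × Set Z)} {a : X} {A : Set Z} :
    (a, A) ∈ kleisliComp R S ↔ ∃ B, (a, B) ∈ R ∧ A = kleisliImage S B :=
  Iff.rfl

theorem kleisliImage_sUnion (T : Set (Z × Set W)) (𝒞 : Set (Set Z)) :
    kleisliImage T (⋃₀ 𝒞) = ⋃₀ (kleisliImage T '' 𝒞) := by
  ext w
  simp only [kleisliImage, sUnion_image, mem_sUnion, mem_iUnion, mem_ofPred_eq]
  grind

theorem kleisliImage_kleisliComp (S : Set (Y × Set Z)) (T : Set (Z × Set W)) (B : Set Y) :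
    kleisliImage (kleisliComp S T) B = kleisliImage T (kleisliImage S B) := by
  have hcomp : {E | ∃ b ∈ B, (b, E) ∈ kleisliComp S T} =
      kleisliImage T '' {C | ∃ b ∈ B, (b, C) ∈ S} := by
    ext E
    simp only [mem_kleisliComp, mem_image, mem_ofPred_eq]
    grind
  rw [kleisliImage, hcomp, ← kleisliImage_sUnion]
  rfl

end

theorem kleisli_assoc {X Y Z W : Type*} (R : Set (X × Set Y)) (S : Set (Y × Set Z))
    (T : Set (Z × Set W)) :
    kleisliComp (kleisliComp R S) T = kleisliComp R (kleisliComp S T) := by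
  ext ⟨a, A⟩
  simp only [mem_kleisliComp, kleisliImage_kleisliComp]
  constructor
  · rintro ⟨_, ⟨B, hB, rfl⟩, rfl⟩
    exact ⟨B, hB, rfl⟩
  · rintro ⟨B, hB, rfl⟩
    exact ⟨_, ⟨B, hB, rfl⟩, rfl⟩
end

section
/- Kleisli composition need not have a left unit: on X = {a} there is no multirelation E ⊆ X × ℘(X) such that E ∘ R = R for all multirelations R ⊆ X × ℘(X). -/
open Set

variable {X Y Z : Type*}

theorem relDom_kleisliComp_subset (R : Set (X × Set Y)) (S : Set (Y × Set Z)) :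
    relDom (kleisliComp R S) ⊆ relDom R := by
  rintro x ⟨A, B, hB, -⟩
  exact ⟨B, hB⟩

theorem kleisliComp_empty (R : Set (X × Set Y)) :
    kleisliComp R (∅ : Set (Y × Set Z)) = (fun x => (x, ∅)) '' relDom R := by
  ext ⟨x, A⟩
  simp [kleisliComp, relDom, eq_comm]

/-- Composing with the full multirelation forces `relDom E = univ`, and then `E ∘ ∅` relates
every point to `∅`, so it cannot be `∅`. -/
theorem not_exists_kleisliComp_left_unit [Nonempty X] :
    ¬ ∃ E : Set (X × Set X), ∀ R : Set (X × Set X), kleisliComp E R = R := by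
  rintro ⟨E, hE⟩
  obtain ⟨x⟩ := ‹Nonempty X›
  have hx : x ∈ relDom E :=
    relDom_kleisliComp_subset E univ (by rw [hE univ]; exact ⟨∅, trivial⟩)
  have hempty := kleisliComp_empty (Z := X) E
  rw [hE] at hempty
  exact ((nonempty_of_mem hx).image _).ne_empty hempty.symm

theorem kleisli_no_left_unit :
    ¬ ∃ E : Set (Unit × Set Unit), ∀ R : Set (Unit × Set Unit),
      kleisliComp E R = R :=
  not_exists_kleisliComp_left_unit
end

section
/- The Parikh liftings satisfy the sub-interchange inclusion S_⋄ ; T_⋄ ⊆ (S ⋄ T)_⋄: for all multirelations S ⊆ Y × ℘(Z) and T ⊆ Z × ℘(W), the relational composite of the Parikh liftings of S and T is contained in the Parikh lifting of their Parikh composition. -/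
open Set

theorem parikhLift_subinterchange {Y Z W : Type*} (S : Set (Y × Set Z)) (T : Set (Z × Set W)) :
    relComp (parikhLift S) (parikhLift T) ⊆ parikhLift (parikhComp S T) := by
  rintro ⟨A, C⟩ ⟨B, hAB, hBC⟩ a ha
  exact ⟨B, hAB a ha, hBC⟩
end

section
/- For multirelations R, S, T with R and S up-closed, Parikh composition is associative: (R ⋄ S) ⋄ T = R ⋄ (S ⋄ T). -/
open Set

theorem parikh_assoc_of_upClosed {X Y Z W : Type*} (R : Set (X × Set Y)) (S : Set (Y × Set Z))
    (T : Set (Z × Set W)) (hR : upClosed R) (hS : upClosed S) :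
    parikhComp (parikhComp R S) T = parikhComp R (parikhComp S T) := by
  ext ⟨a, A⟩
  constructor
  · rintro ⟨B, ⟨B', hB', hBS⟩, hBT⟩
    exact ⟨B', hB', fun b hb => ⟨B, hBS b hb, hBT⟩⟩
  · rintro ⟨B, hB, h⟩
    choose C hC hCT using h
    refine ⟨⋃ b ∈ B, C b ‹_›, ⟨B, hB, fun b hb => hS b _ _ (hC b hb) ?_⟩, ?_⟩
    · exact subset_iUnion₂ (s := fun b (hb : b ∈ B) => C b hb) b hb
    · rintro z hz
      simp only [mem_iUnion] at hz
      obtain ⟨b, hb, hzb⟩ := hz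
      exact hCT b hb z hzb
end

section
/- Parikh composition need not have right units: on X = {a}, there is no multirelation E ⊆ X × ℘(X) such that R ⋄ E = R for all multirelations R ⊆ X × ℘(X). -/
open Set

/- An output set `∅` of `R` is a vacuous witness: through it, `R ⋄ S` relates the input to every
set. So `{(a, ∅)} ⋄ E` contains `(a, univ)`, which `{(a, ∅)}` does not once `Y` is nonempty. -/

theorem mem_parikhComp_of_empty_mem {X Y Z : Type*} {R : Set (X × Set Y)}
    {S : Set (Y × Set Z)} {a : X} (h : (a, ∅) ∈ R) (A : Set Z) : (a, A) ∈ parikhComp R S :=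
  ⟨∅, h, fun _ hb => hb.elim⟩

theorem exists_parikhComp_ne {X Y : Type*} [Nonempty X] [Nonempty Y] (E : Set (Y × Set Y)) :
    ∃ R : Set (X × Set Y), parikhComp R E ≠ R := by
  obtain ⟨a⟩ := ‹Nonempty X›
  refine ⟨{(a, ∅)}, fun hE => ?_⟩
  have h := mem_parikhComp_of_empty_mem (S := E) (mem_singleton (a, (∅ : Set Y))) univ
  rw [hE, mem_singleton_iff, Prod.mk.injEq] at h
  exact univ_nonempty.ne_empty h.2

theorem parikh_no_right_unit :
    ¬ ∃ E : Set (Unit × Set Unit), ∀ R : Set (Unit × Set Unit),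
      parikhComp R E = R := by
  rintro ⟨E, hE⟩
  obtain ⟨R, hR⟩ := exists_parikhComp_ne (X := Unit) E
  exact hR (hE R)
end

section
/- The Parikh lifting of the Parikh lifting of a composite satisfies (S ⋄ T)_⋄ ⊆ (S ; Ξ_Z)_⋄ ; T_⋄, where Ξ_Z is the subset relation on ℘(Z): for multirelations S ⊆ Y × ℘(Z) and T ⊆ Z × ℘(W). -/
open Set

/-! The set `{c | (c, A) ∈ T}` is the largest `C` with `(C, A) ∈ T_⋄`. Every witness `C` of
`(b, A) ∈ S ⋄ T` lies inside it, so it serves as the common intermediate set, reached from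
each `b ∈ B` through `S ; Ξ_Z`. -/

theorem setOf_mem_parikhLift {Z W : Type*} (T : Set (Z × Set W)) (A : Set W) :
    ({c | (c, A) ∈ T}, A) ∈ parikhLift T :=
  fun _ hc => hc

theorem mem_relComp_inclRel_of_mem_parikhComp {Y Z W : Type*} {S : Set (Y × Set Z)}
    {T : Set (Z × Set W)} {b : Y} {A : Set W} (h : (b, A) ∈ parikhComp S T) :
    (b, {c | (c, A) ∈ T}) ∈ relComp S (inclRel Z) :=
  h

theorem parikhLift_comp_subset {Y Z W : Type*} (S : Set (Y × Set Z)) (T : Set (Z × Set W)) :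
    parikhLift (parikhComp S T) ⊆
      relComp (parikhLift (relComp S (inclRel Z))) (parikhLift T) := by
  rintro ⟨B, A⟩ h
  exact ⟨{c | (c, A) ∈ T}, fun b hb => mem_relComp_inclRel_of_mem_parikhComp (h b hb),
    setOf_mem_parikhLift T A⟩
end

section
/- The Peleg lifting of a multirelation is the union of the Peleg liftings of its total-on-domain partial-function refinements: S_* = ⋃{f_* | f ⊑_c S}, where f ⊑_c S means f ⊆ S, f is a partial function, and dom f = dom S. -/
open Set

/-! The selector `f` witnessing `(B, A) ∈ S_*` only matters on `B`; extending it by choice to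
all of `dom S` and taking its graph over `dom S` gives a partial function `f ⊑_c S` with
`(B, A) ∈ f_*`. The other inclusion is monotonicity of the lifting. -/

lemma isUnivalent_graphOn {A B : Type*} (h : A → B) (D : Set A) : isUnivalent (D.graphOn h) := by
  rintro x _ _ ⟨_, -, h₁⟩ ⟨_, -, h₂⟩
  simp only [Prod.mk.injEq] at h₁ h₂
  rw [← h₁.2, ← h₂.2, h₁.1, h₂.1]

lemma relDom_graphOn {A B : Type*} (h : A → B) (D : Set A) : relDom (D.graphOn h) = D := by
  ext x
  simp [relDom]

lemma pelegLift_mono {Y Z : Type*} {f S : Set (Y × Set Z)} (hfS : f ⊆ S) :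
    pelegLift f ⊆ pelegLift S := by
  rintro p ⟨g, hg, hp⟩
  exact ⟨g, fun b hb => hfS (hg b hb), hp⟩

lemma mem_pelegLift_graphOn {Y Z : Type*} {B D : Set Y} (hBD : B ⊆ D) (h : Y → Set Z) :
    (B, ⋃ b ∈ B, h b) ∈ pelegLift (D.graphOn h) :=
  ⟨h, fun b hb => ⟨b, hBD hb, rfl⟩, rfl⟩

lemma exists_eqOn_forall_mem_relDom {Y W : Type*} {S : Set (Y × W)} {B : Set Y} {g : Y → W}
    (hg : ∀ b ∈ B, (b, g b) ∈ S) :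
    ∃ h : Y → W, EqOn h g B ∧ ∀ y ∈ relDom S, (y, h y) ∈ S := by
  classical
  refine ⟨fun y => if hy : y ∈ relDom S ∧ y ∉ B then hy.1.choose else g y, ?_, ?_⟩
  · intro b hb
    simp [hb]
  · intro y hy
    by_cases hyB : y ∈ B
    · simpa [hyB] using hg y hyB
    · simpa [hy, hyB] using hy.choose_spec

theorem pelegLift_eq_sUnion_pfn {Y Z : Type*} (S : Set (Y × Set Z)) :
    pelegLift S =
      ⋃₀ ((fun f => pelegLift f) ''
        {f : Set (Y × Set Z) | f ⊆ S ∧ isUnivalent f ∧ relDom f = relDom S}) := by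
  refine Subset.antisymm ?_ (sUnion_subset ?_)
  · rintro ⟨B, A⟩ ⟨g, hg, hA : A = ⋃ b ∈ B, g b⟩
    subst hA
    obtain ⟨h, hhg, hhS⟩ := exists_eqOn_forall_mem_relDom hg
    have hB : B ⊆ relDom S := fun b hb => ⟨g b, hg b hb⟩
    refine ⟨_, ⟨(relDom S).graphOn h, ⟨?_, isUnivalent_graphOn h _, relDom_graphOn h _⟩, rfl⟩, ?_⟩
    · rintro _ ⟨y, hy, rfl⟩
      exact hhS y hy
    · rw [← iUnion₂_congr hhg]
      exact mem_pelegLift_graphOn hB h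
  · rintro _ ⟨f, ⟨hfS, -, -⟩, rfl⟩
    exact pelegLift_mono hfS
end

section
/- The singleton map is a left unit for Peleg composition: for every multirelation S ⊆ Y × ℘(Z), 1_Y ∗ S = S. -/
open Set

theorem pelegComp_eq_relComp_pelegLift {X Y Z : Type*} (R : Set (X × Set Y))
    (S : Set (Y × Set Z)) : pelegComp R S = relComp R (pelegLift S) :=
  rfl

theorem singleton_mem_pelegLift_iff {Y Z : Type*} (S : Set (Y × Set Z)) (y : Y) (A : Set Z) :
    (({y} : Set Y), A) ∈ pelegLift S ↔ (y, A) ∈ S := by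
  constructor
  · rintro ⟨f, hf, hA⟩
    simp only [mem_singleton_iff, iUnion_iUnion_eq_left] at hA
    exact hA ▸ hf y rfl
  · exact fun h => ⟨fun _ => A, fun b (hb : b = y) => hb ▸ h, by simp⟩

theorem mem_relComp_singletonMap_iff {Y W : Type*} (T : Set (Set Y × W)) (y : Y) (w : W) :
    (y, w) ∈ relComp (singletonMap Y) T ↔ (({y} : Set Y), w) ∈ T := by
  constructor
  · rintro ⟨B, hB, hBw⟩
    rwa [show B = {y} from hB] at hBw
  · exact fun h => ⟨{y}, rfl, h⟩

theorem peleg_left_unit {Y Z : Type*} (S : Set (Y × Set Z)) :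
    pelegComp (singletonMap Y) S = S := by
  ext ⟨y, A⟩
  rw [pelegComp_eq_relComp_pelegLift, mem_relComp_singletonMap_iff, singleton_mem_pelegLift_iff]
end

section
/- Peleg composition is weakly associative: for all multirelations R ⊆ X × ℘(Y), S ⊆ Y × ℘(Z), T ⊆ Z × ℘(W), the inclusion (R ∗ S) ∗ T ⊆ R ∗ (S ∗ T) holds. -/
open Set

theorem Set.biUnion_biUnion {α β γ : Type*} (B : Set α) (f : α → Set β) (g : β → Set γ) :
    ⋃ c ∈ ⋃ b ∈ B, f b, g c = ⋃ b ∈ B, ⋃ c ∈ f b, g c := by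
  simp only [biUnion_iUnion]

theorem mk_biUnion_mem_pelegComp {X Y Z : Type*} {R : Set (X × Set Y)} {S : Set (Y × Set Z)}
    {a : X} {B : Set Y} (hB : (a, B) ∈ R) {f : Y → Set Z} (hf : ∀ b ∈ B, (b, f b) ∈ S) :
    (a, ⋃ b ∈ B, f b) ∈ pelegComp R S :=
  ⟨B, hB, f, hf, rfl⟩

/-- Reassociation of witnesses: choices `f` along `R ∗ S` and `g` along `T` combine into the
choice `b ↦ ⋃ c ∈ f b, g c` along `S ∗ T`, and the resulting unions agree. -/
theorem peleg_weak_assoc {X Y Z W : Type*} (R : Set (X × Set Y)) (S : Set (Y × Set Z))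
    (T : Set (Z × Set W)) :
    pelegComp (pelegComp R S) T ⊆ pelegComp R (pelegComp S T) := by
  rintro ⟨a, _⟩ ⟨_, ⟨C, hC, f, hf, rfl⟩, g, hg, rfl⟩
  rw [Set.biUnion_biUnion]
  exact mk_biUnion_mem_pelegComp hC fun b hb =>
    mk_biUnion_mem_pelegComp (hf b hb) fun c hc => hg c (mem_biUnion hb hc)
end
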